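/- Let N ≥ 1, let B be an N×N integer matrix, let u ∈ {1,…,N}, let B₋ be the single Cuntz splice of B at u, and let B₋₋ be the double Cuntz splice of B at u. Then there exist U ∈ SL(N+4,ℤ) and V ∈ GL(N+4,ℤ) with det V = −1, each of which agrees with the identity matrix in every entry (i,j) for which not both i and j belong to the set {N+1, N+2, N+3, N+4}, such that U · (B₋ ⊕ (−I₂)) · V = B₋₋. -/

import Mathlib

/-!
Both `B₋ ⊕ (-I₂)` and `B₋₋` have the form `fromBlocks B C R D` with the same rank-one
couplings `C = e_u e₀ᵀ`, `R = e₀ e_uᵀ`; only the `4 × 4` corners `D₁`, `D₂` differ. Hence any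
`4 × 4` matrices `P`, `Q` with `P D₁ Q = D₂`, `P e₀ = e₀` and `e₀ᵀ Q = e₀ᵀ` lift to the
equivalence `1 ⊕ P`, `1 ⊕ Q`, and an explicit such pair has `det P = 1`, `det Q = -1`.
-/

open Matrix

/-- The single Cuntz splice `B₋` of `B` at `u`, augmented by `-I₂`, i.e. the matrix
`B₋ ⊕ (-I₂)` where the indices `N+1, N+2` (the splice) are modelled as
`Sum.inr 0, Sum.inr 1` and the indices `N+3, N+4` (carrying `-I₂`) as
`Sum.inr 2, Sum.inr 3`. -/
def cuntzSpliceOnceExt {N : ℕ} (B : Matrix (Fin N) (Fin N) ℤ) (u : Fin N) :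
    Matrix (Fin N ⊕ Fin 4) (Fin N ⊕ Fin 4) ℤ :=
  fun i j => match i, j with
  | Sum.inl i, Sum.inl j => B i j
  | Sum.inl i, Sum.inr k => if i = u ∧ k = 0 then 1 else 0
  | Sum.inr k, Sum.inl j => if k = 0 ∧ j = u then 1 else 0
  | Sum.inr k, Sum.inr l => !![0, 1, 0, 0; 1, 0, 0, 0; 0, 0, -1, 0; 0, 0, 0, -1] k l

/-- The double Cuntz splice `B₋₋` of `B` at `u`, with the four new indices
`N+1, …, N+4` modelled as `Sum.inr 0, …, Sum.inr 3`. -/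
def cuntzSpliceTwice {N : ℕ} (B : Matrix (Fin N) (Fin N) ℤ) (u : Fin N) :
    Matrix (Fin N ⊕ Fin 4) (Fin N ⊕ Fin 4) ℤ :=
  fun i j => match i, j with
  | Sum.inl i, Sum.inl j => B i j
  | Sum.inl i, Sum.inr k => if i = u ∧ k = 0 then 1 else 0
  | Sum.inr k, Sum.inl j => if k = 0 ∧ j = u then 1 else 0
  | Sum.inr k, Sum.inr l => !![0, 1, 1, 0; 1, 0, 0, 0; 1, 0, 0, 1; 0, 0, 1, 0] k l

namespace Matrix

variable {m n α : Type*}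

theorem fromBlocks_one_zero_zero_apply_of_not_inr_inr [DecidableEq m] [DecidableEq n] [Zero α]
    [One α] (P : Matrix n n α) {i j : m ⊕ n}
    (h : ¬((∃ k, i = Sum.inr k) ∧ (∃ k, j = Sum.inr k))) :
    fromBlocks 1 0 0 P i j = (1 : Matrix (m ⊕ n) (m ⊕ n) α) i j := by
  rw [← fromBlocks_one]
  rcases i with i | i <;> rcases j with j | j <;> simp_all

theorem fromBlocks_one_mul_fromBlocks_mul_fromBlocks_one [Fintype m] [Fintype n] [DecidableEq m]
    [Semiring α] (A : Matrix m m α) (C : Matrix m n α) (R : Matrix n m α) (D P Q : Matrix n n α)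
    (hP : P * R = R) (hQ : C * Q = C) :
    fromBlocks 1 0 0 P * fromBlocks A C R D * fromBlocks 1 0 0 Q
      = fromBlocks A C R (P * D * Q) := by
  simp [fromBlocks_multiply, hP, hQ, Matrix.mul_assoc]

end Matrix

section CuntzSplice

variable {N : ℕ} (B : Matrix (Fin N) (Fin N) ℤ) (u : Fin N)

theorem cuntzSpliceOnceExt_eq_fromBlocks :
    cuntzSpliceOnceExt B u
      = fromBlocks B (vecMulVec (Pi.single u 1) (Pi.single 0 1))
          (vecMulVec (Pi.single 0 1) (Pi.single u 1))
          !![0, 1, 0, 0; 1, 0, 0, 0; 0, 0, -1, 0; 0, 0, 0, -1] := by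
  ext (i | i) (j | j) <;>
    simp only [cuntzSpliceOnceExt, fromBlocks_apply₁₁, fromBlocks_apply₁₂, fromBlocks_apply₂₁,
      fromBlocks_apply₂₂, vecMulVec_apply, Pi.single_apply, ite_zero_mul_ite_zero, mul_one]

theorem cuntzSpliceTwice_eq_fromBlocks :
    cuntzSpliceTwice B u
      = fromBlocks B (vecMulVec (Pi.single u 1) (Pi.single 0 1))
          (vecMulVec (Pi.single 0 1) (Pi.single u 1))
          !![0, 1, 1, 0; 1, 0, 0, 0; 1, 0, 0, 1; 0, 0, 1, 0] := by
  ext (i | i) (j | j) <;>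
    simp only [cuntzSpliceTwice, fromBlocks_apply₁₁, fromBlocks_apply₁₂, fromBlocks_apply₂₁,
      fromBlocks_apply₂₂, vecMulVec_apply, Pi.single_apply, ite_zero_mul_ite_zero, mul_one]

end CuntzSplice

def cuntzSpliceLeft : Matrix (Fin 4) (Fin 4) ℤ :=
  !![1, 0, 0, 0; 0, 1, 0, 0; 0, -1, -1, -1; 0, -1, 0, -1]

def cuntzSpliceRight : Matrix (Fin 4) (Fin 4) ℤ :=
  !![1, 0, 0, 0; 0, 1, 1, 0; 1, 0, -1, 1; 1, 0, 1, 0]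

theorem det_cuntzSpliceLeft : cuntzSpliceLeft.det = 1 := by decide

theorem det_cuntzSpliceRight : cuntzSpliceRight.det = -1 := by decide

theorem cuntzSpliceLeft_mulVec_single_zero :
    cuntzSpliceLeft *ᵥ Pi.single 0 1 = Pi.single 0 1 := by decide

theorem single_zero_vecMul_cuntzSpliceRight :
    Pi.single 0 1 ᵥ* cuntzSpliceRight = Pi.single 0 1 := by decide

theorem cuntzSpliceLeft_mul_mul_cuntzSpliceRight :
    cuntzSpliceLeft * !![0, 1, 0, 0; 1, 0, 0, 0; 0, 0, -1, 0; 0, 0, 0, -1] * cuntzSpliceRight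
      = !![0, 1, 1, 0; 1, 0, 0, 0; 1, 0, 0, 1; 0, 0, 1, 0] := by decide

theorem cuntzSplice_once_to_twice_glEquivalence_general
    (N : ℕ) (B : Matrix (Fin N) (Fin N) ℤ) (u : Fin N) :
    ∃ U V : Matrix (Fin N ⊕ Fin 4) (Fin N ⊕ Fin 4) ℤ,
      U.det = 1 ∧ V.det = -1 ∧
      (∀ i j : Fin N ⊕ Fin 4,
        ¬((∃ k, i = Sum.inr k) ∧ (∃ k, j = Sum.inr k)) →
          U i j = (1 : Matrix (Fin N ⊕ Fin 4) (Fin N ⊕ Fin 4) ℤ) i j) ∧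
      (∀ i j : Fin N ⊕ Fin 4,
        ¬((∃ k, i = Sum.inr k) ∧ (∃ k, j = Sum.inr k)) →
          V i j = (1 : Matrix (Fin N ⊕ Fin 4) (Fin N ⊕ Fin 4) ℤ) i j) ∧
      U * cuntzSpliceOnceExt B u * V = cuntzSpliceTwice B u := by
  refine ⟨fromBlocks 1 0 0 cuntzSpliceLeft, fromBlocks 1 0 0 cuntzSpliceRight,
    ?_, ?_, fun _ _ => fromBlocks_one_zero_zero_apply_of_not_inr_inr _,
    fun _ _ => fromBlocks_one_zero_zero_apply_of_not_inr_inr _, ?_⟩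
  · rw [det_fromBlocks_zero₂₁, det_one, det_cuntzSpliceLeft, one_mul]
  · rw [det_fromBlocks_zero₂₁, det_one, det_cuntzSpliceRight, one_mul]
  · rw [cuntzSpliceOnceExt_eq_fromBlocks, cuntzSpliceTwice_eq_fromBlocks,
      fromBlocks_one_mul_fromBlocks_mul_fromBlocks_one, cuntzSpliceLeft_mul_mul_cuntzSpliceRight]
    · rw [mul_vecMulVec, cuntzSpliceLeft_mulVec_single_zero]
    · rw [vecMulVec_mul, single_zero_vecMul_cuntzSpliceRight]

/-- There is a `GL`-equivalence `(U, V)` from `B₋ ⊕ (-I₂)` to the double Cuntz splice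
`B₋₋`, with `det U = 1`, `det V = -1`, both supported on the rows and columns indexed
by `N+1, …, N+4`. -/
theorem cuntzSplice_once_to_twice_glEquivalence
    (N : ℕ) (hN : 1 ≤ N) (B : Matrix (Fin N) (Fin N) ℤ) (u : Fin N) :
    ∃ U V : Matrix (Fin N ⊕ Fin 4) (Fin N ⊕ Fin 4) ℤ,
      U.det = 1 ∧ V.det = -1 ∧
      (∀ i j : Fin N ⊕ Fin 4,
        ¬((∃ k, i = Sum.inr k) ∧ (∃ k, j = Sum.inr k)) →
          U i j = (1 : Matrix (Fin N ⊕ Fin 4) (Fin N ⊕ Fin 4) ℤ) i j) ∧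
      (∀ i j : Fin N ⊕ Fin 4,
        ¬((∃ k, i = Sum.inr k) ∧ (∃ k, j = Sum.inr k)) →
          V i j = (1 : Matrix (Fin N ⊕ Fin 4) (Fin N ⊕ Fin 4) ℤ) i j) ∧
      U * cuntzSpliceOnceExt B u * V = cuntzSpliceTwice B u :=
  cuntzSplice_once_to_twice_glEquivalence_general N B u
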